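/- arXiv:2407.06848 — 2 statements merged into one kernel-verified Lean document; each statement's English description precedes it below -/
import Mathlib

section
/- Let F be a multiple mapping on a compact metric space X and k ≥ 2. Then F is Kato chaotic (Hausdorff metric sensitive and accessible) if and only if F^k (the multiple mapping whose n-th iterate is F^{kn}) is Kato chaotic. -/
open Set Metric Filter TopologicalSpace

/-- The set of all `n`-fold compositions of members of `F = {f 0, …, f (m-1)}` applied to `x`. -/
def iterSet {X : Type*} {m : ℕ} (f : Fin m → X → X) : ℕ → X → Set X
  | 0, x => {x}
  | n + 1, x => ⋃ i, iterSet f n (f i x)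

lemma iterSet_finite {X : Type*} {m : ℕ} (f : Fin m → X → X) (n : ℕ) (x : X) :
    (iterSet f n x).Finite := by
  induction n generalizing x with
  | zero => exact Set.finite_singleton x
  | succ n ih => exact Set.finite_iUnion fun i => ih _

lemma iterSet_nonempty {X : Type*} {m : ℕ} (hm : 0 < m) (f : Fin m → X → X) (n : ℕ) (x : X) :
    (iterSet f n x).Nonempty := by
  induction n generalizing x with
  | zero => exact ⟨x, rfl⟩
  | succ n ih =>
      obtain ⟨y, hy⟩ := ih (f ⟨0, hm⟩ x)
      exact ⟨y, Set.mem_iUnion.2 ⟨⟨0, hm⟩, hy⟩⟩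

/-- `F^n(x)` as an element of the hyperspace of nonempty compact subsets. -/
noncomputable def iterNC {X : Type*} [MetricSpace X] {m : ℕ} (hm : 0 < m)
    (f : Fin m → X → X) (n : ℕ) (x : X) : NonemptyCompacts X :=
  ⟨⟨iterSet f n x, (iterSet_finite f n x).isCompact⟩, iterSet_nonempty hm f n x⟩

/-- Kato's chaos for a family of iterate maps `g : ℕ → X → Set X`
(`g n x` is the `n`-th iterate set of `x`): sensitivity and accessibility. -/
def KatoChaoticOf {X : Type*} [MetricSpace X] (g : ℕ → X → Set X) : Prop :=
  (∃ δ > (0 : ℝ), ∀ U : Set X, IsOpen U → U.Nonempty →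
    ∃ x ∈ U, ∃ y ∈ U, ∃ n : ℕ, 1 ≤ n ∧
      δ < Metric.hausdorffDist (g n x) (g n y)) ∧
  (∀ ε > (0 : ℝ), ∀ U V : Set X, IsOpen U → U.Nonempty → IsOpen V → V.Nonempty →
    ∃ x ∈ U, ∃ y ∈ V, ∃ n : ℕ, 1 ≤ n ∧
      Metric.hausdorffDist (g n x) (g n y) < ε)

/-- Decomposition of iterate sets: the `(n+j)`-th iterate set is the union of the
`j`-th iterate sets over the points of the `n`-th iterate set. -/
lemma iterSet_add {X : Type*} {m : ℕ} (f : Fin m → X → X) (n j : ℕ) (x : X) :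
    iterSet f (n + j) x = ⋃ a ∈ iterSet f n x, iterSet f j a := by
  induction n generalizing x with
  | zero => simp [iterSet]
  | succ n ih =>
      have h1 : n + 1 + j = (n + j) + 1 := by omega
      rw [h1]
      show (⋃ i, iterSet f (n + j) (f i x)) = _
      have h2 : iterSet f (n + 1) x = ⋃ i, iterSet f n (f i x) := rfl
      rw [h2]
      simp only [ih]
      ext w
      simp only [Set.mem_iUnion]
      tauto

/-- Uniform continuity of the `n`-th iterate set map, in pointwise form. -/
lemma iterSet_unifCont {X : Type*} [MetricSpace X] [CompactSpace X] {m : ℕ} (hm : 0 < m)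
    (f : Fin m → X → X) (hf : ∀ i, Continuous (f i)) (n : ℕ) {ε : ℝ} (hε : 0 < ε) :
    ∃ η > 0, ∀ x y : X, dist x y < η →
      ∀ a ∈ iterSet f n x, ∃ b ∈ iterSet f n y, dist a b < ε := by
  induction n with
  | zero =>
      refine ⟨ε, hε, fun x y hxy a ha => ⟨y, rfl, ?_⟩⟩
      have : a = x := ha
      rwa [this]
  | succ n ih =>
      obtain ⟨η, hη, H⟩ := ih
      have hu : ∀ i : Fin m, ∃ ηi > 0, ∀ x y : X, dist x y < ηi →
          dist (f i x) (f i y) < η := by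
        intro i
        obtain ⟨ηi, hηi, hi⟩ := Metric.uniformContinuous_iff.mp
          (CompactSpace.uniformContinuous_of_continuous (hf i)) η hη
        exact ⟨ηi, hηi, fun x y h => hi h⟩
      choose ηi hηi1 hηi2 using hu
      have hne : (Finset.univ : Finset (Fin m)).Nonempty := ⟨⟨0, hm⟩, Finset.mem_univ _⟩
      refine ⟨Finset.univ.inf' hne ηi, (Finset.lt_inf'_iff hne).2 fun i _ => hηi1 i, ?_⟩
      intro x y hxy a ha
      obtain ⟨i, hi⟩ := Set.mem_iUnion.1 ha
      have hxy' : dist x y < ηi i :=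
        lt_of_lt_of_le hxy (Finset.inf'_le ηi (Finset.mem_univ i))
      obtain ⟨b, hb, hab⟩ := H (f i x) (f i y) (hηi2 i x y hxy') a hi
      exact ⟨b, Set.mem_iUnion.2 ⟨i, hb⟩, hab⟩

/-- A modulus of uniform continuity that works for all levels `j < k` simultaneously. -/
lemma iterSet_unifCont_upto {X : Type*} [MetricSpace X] [CompactSpace X] {m : ℕ} (hm : 0 < m)
    (f : Fin m → X → X) (hf : ∀ i, Continuous (f i)) (k : ℕ) (hk : 0 < k) {ε : ℝ} (hε : 0 < ε) :
    ∃ η > 0, ∀ j < k, ∀ x y : X, dist x y < η →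
      ∀ a ∈ iterSet f j x, ∃ b ∈ iterSet f j y, dist a b < ε := by
  have h : ∀ j : ℕ, ∃ η > 0, ∀ x y : X, dist x y < η →
      ∀ a ∈ iterSet f j x, ∃ b ∈ iterSet f j y, dist a b < ε :=
    fun j => iterSet_unifCont hm f hf j hε
  choose η hη1 hη2 using h
  have hne : (Finset.range k).Nonempty := ⟨0, Finset.mem_range.2 hk⟩
  refine ⟨(Finset.range k).inf' hne η,
    (Finset.lt_inf'_iff hne).2 fun j _ => hη1 j, ?_⟩
  intro j hj x y hxy a ha
  exact hη2 j x y
    (lt_of_lt_of_le hxy (Finset.inf'_le η (Finset.mem_range.2 hj))) a ha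

lemma iterSet_edist_ne_top {X : Type*} [MetricSpace X] {m : ℕ} (hm : 0 < m)
    (f : Fin m → X → X) (n : ℕ) (x y : X) :
    EMetric.hausdorffEdist (iterSet f n x) (iterSet f n y) ≠ ⊤ :=
  Metric.hausdorffEdist_ne_top_of_nonempty_of_bounded
    (iterSet_nonempty hm f n x) (iterSet_nonempty hm f n y)
    (iterSet_finite f n x).isBounded (iterSet_finite f n y).isBounded

/-- Forward propagation of Hausdorff closeness by `j` more steps. -/
lemma iterSet_hd_forward {X : Type*} [MetricSpace X] {m : ℕ} (hm : 0 < m)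
    (f : Fin m → X → X) {n j : ℕ} {x y : X} {ε η : ℝ} (hε : 0 ≤ ε)
    (H : ∀ a b : X, dist a b < η → ∀ w ∈ iterSet f j a, ∃ v ∈ iterSet f j b, dist w v < ε)
    (hd : Metric.hausdorffDist (iterSet f n x) (iterSet f n y) < η) :
    Metric.hausdorffDist (iterSet f (n + j) x) (iterSet f (n + j) y) ≤ ε := by
  have hnt := iterSet_edist_ne_top hm f n x y
  refine Metric.hausdorffDist_le_of_mem_dist hε ?_ ?_
  · intro w hw
    rw [iterSet_add] at hw
    obtain ⟨a, ha, hwa⟩ := Set.mem_iUnion₂.1 hw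
    obtain ⟨b, hb, hab⟩ := Metric.exists_dist_lt_of_hausdorffDist_lt ha hd hnt
    obtain ⟨v, hv, hwv⟩ := H a b hab w hwa
    exact ⟨v, by rw [iterSet_add]; exact Set.mem_iUnion₂.2 ⟨b, hb, hv⟩, hwv.le⟩
  · intro w hw
    rw [iterSet_add] at hw
    obtain ⟨b, hb, hwb⟩ := Set.mem_iUnion₂.1 hw
    obtain ⟨a, ha, hab⟩ := Metric.exists_dist_lt_of_hausdorffDist_lt' hb hd hnt
    obtain ⟨v, hv, hwv⟩ := H b a (by rwa [dist_comm]) w hwb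
    exact ⟨v, by rw [iterSet_add]; exact Set.mem_iUnion₂.2 ⟨a, ha, hv⟩, hwv.le⟩

/-- A multiple mapping `F` on a compact metric space is Kato chaotic if and only if `F^k`
(whose `n`-th iterate of `x` is `F^{kn}(x)`) is Kato chaotic, for any `k ≥ 2`. -/
theorem kato_chaos_iff_iterate {X : Type*} [MetricSpace X] [CompactSpace X]
    {m : ℕ} (hm : 0 < m) (f : Fin m → X → X) (hf : ∀ i, Continuous (f i))
    (k : ℕ) (hk : 2 ≤ k) :
    KatoChaoticOf (fun n x => iterSet f n x) ↔
      KatoChaoticOf (fun n x => iterSet f (k * n) x) := by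
  have hk0 : 0 < k := by omega
  constructor
  · rintro ⟨⟨δ, hδ, hsen⟩, hacc⟩
    obtain ⟨η, hη, H⟩ := iterSet_unifCont_upto hm f hf k hk0 hδ
    constructor
    · -- sensitivity of F^k
      refine ⟨η / 2, by positivity, ?_⟩
      intro U hU hUne
      obtain ⟨u, hu⟩ := hUne
      have hU' : IsOpen (U ∩ Metric.ball u (η / 2)) :=
        hU.inter Metric.isOpen_ball
      have hU'ne : (U ∩ Metric.ball u (η / 2)).Nonempty :=
        ⟨u, hu, Metric.mem_ball_self (by positivity)⟩
      obtain ⟨x, hx, y, hy, n, hn, hd⟩ := hsen _ hU' hU'ne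
      simp only at hd
      have hxy : dist x y < η := by
        have h1 := Metric.mem_ball.1 hx.2
        have h2 := Metric.mem_ball.1 hy.2
        calc dist x y ≤ dist x u + dist u y := dist_triangle _ _ _
          _ < η / 2 + η / 2 := by rw [dist_comm u y]; linarith
          _ = η := by ring
      -- key: close points stay δ-close for the first k-1 steps
      have hdle : ∀ j < k, Metric.hausdorffDist (iterSet f j x) (iterSet f j y) ≤ δ := by
        intro j hj
        refine Metric.hausdorffDist_le_of_mem_dist hδ.le ?_ ?_
        · intro a ha
          obtain ⟨b, hb, hab⟩ := H j hj x y hxy a ha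
          exact ⟨b, hb, hab.le⟩
        · intro b hb
          obtain ⟨a, ha, hab⟩ := H j hj y x (by rwa [dist_comm]) b hb
          exact ⟨a, ha, hab.le⟩
      have hnk : k ≤ n := by
        by_contra hc
        exact absurd hd (not_lt.2 (hdle n (by omega)))
      refine ⟨x, hx.1, y, hy.1, n / k, (Nat.one_le_div_iff hk0).2 hnk, ?_⟩
      simp only
      by_contra hc
      push_neg at hc
      have hlt : Metric.hausdorffDist (iterSet f (k * (n / k)) x)
          (iterSet f (k * (n / k)) y) < η := lt_of_le_of_lt hc (by linarith)
      have hmod : n % k < k := Nat.mod_lt _ hk0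
      have hdm := Nat.div_add_mod n k
      have hfin : Metric.hausdorffDist (iterSet f (k * (n / k) + n % k) x)
          (iterSet f (k * (n / k) + n % k) y) ≤ δ :=
        iterSet_hd_forward hm f hδ.le (H (n % k) hmod) hlt
      rw [hdm] at hfin
      exact absurd hd (not_lt.2 hfin)
    · -- accessibility of F^k
      intro ε hε U V hU hUne hV hVne
      obtain ⟨η', hη', H'⟩ := iterSet_unifCont_upto hm f hf k hk0 (half_pos hε)
      obtain ⟨x, hx, y, hy, n, hn, hd⟩ := hacc η' hη' U V hU hUne hV hVne
      simp only at hd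
      -- choose q ≥ 1, j < k with k*q = n + j
      have hqj : ∃ q j : ℕ, 1 ≤ q ∧ j < k ∧ k * q = n + j := by
        rcases Nat.eq_zero_or_pos (n % k) with h0 | hpos
        · have hdvd := Nat.dvd_of_mod_eq_zero h0
          have hkn : k ≤ n := Nat.le_of_dvd (by omega) hdvd
          exact ⟨n / k, 0, (Nat.one_le_div_iff hk0).2 hkn, by omega,
            by rw [Nat.mul_div_cancel' hdvd, Nat.add_zero]⟩
        · have hdm := Nat.div_add_mod n k
          have hmod : n % k < k := Nat.mod_lt _ hk0
          refine ⟨n / k + 1, k - n % k, Nat.le_add_left 1 _, Nat.sub_lt hk0 hpos, ?_⟩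
          rw [Nat.mul_succ]
          omega
      obtain ⟨q, j, hq, hj, hkq⟩ := hqj
      refine ⟨x, hx, y, hy, q, hq, ?_⟩
      simp only
      rw [hkq]
      calc Metric.hausdorffDist (iterSet f (n + j) x) (iterSet f (n + j) y)
          ≤ ε / 2 := iterSet_hd_forward hm f (by positivity) (H' j hj) hd
        _ < ε := by linarith
  · rintro ⟨⟨δ, hδ, hsen⟩, hacc⟩
    constructor
    · refine ⟨δ, hδ, ?_⟩
      intro U hU hUne
      obtain ⟨x, hx, y, hy, n, hn, hd⟩ := hsen U hU hUne
      exact ⟨x, hx, y, hy, k * n, le_trans hn (Nat.le_mul_of_pos_left n hk0), hd⟩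
    · intro ε hε U V hU hUne hV hVne
      obtain ⟨x, hx, y, hy, n, hn, hd⟩ := hacc ε hε U V hU hUne hV hVne
      exact ⟨x, hx, y, hy, k * n, le_trans hn (Nat.le_mul_of_pos_left n hk0), hd⟩
end

section
/- With X = ω(u, σ) as above, a = 000..., f_0 ≡ a, and F = {σ, f_0}, the system (X, F) is Hausdorff metric distributionally chaotic: there is an uncountable set S ⊆ X such that for any distinct x, y ∈ S, limsup_{n→∞} (1/n)·#{0 ≤ i ≤ n−1 : d_H(F^i(x), F^i(y)) < t} = 1 for all t > 0, and liminf_{n→∞} (1/n)·#{0 ≤ i ≤ n−1 : d_H(F^i(x), F^i(y)) < 1} = 0. -/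
open Set Metric Filter TopologicalSpace

/-- The words `A_n` over the alphabet `{0,1}` (`false = 0`, `true = 1`):
`A₁ = 10111` and `A_{n+1} = A_n O_n A_n I_n A_n`, where `O_n` (resp. `I_n`) is the constant-`0`
(resp. constant-`1`) word of the same length as `A_n`. (`Aword 0` is a dummy value.) -/
def Aword : ℕ → List Bool
  | 0 => []
  | 1 => [true, false, true, true, true]
  | n + 2 =>
      Aword (n + 1) ++ List.replicate (Aword (n + 1)).length false ++ Aword (n + 1)
        ++ List.replicate (Aword (n + 1)).length true ++ Aword (n + 1)
def Sig2 : Type := ℕ → Bool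

noncomputable def sdist (a b : Sig2) : ℝ :=
  ∑' i : ℕ, (if a i = b i then (0 : ℝ) else 1) / 2 ^ i

lemma sdist_term_nonneg (a b : Sig2) (i : ℕ) :
    0 ≤ (if a i = b i then (0 : ℝ) else 1) / 2 ^ i := by
  apply div_nonneg _ (by positivity)
  split <;> norm_num

lemma sdist_summable (a b : Sig2) :
    Summable fun i : ℕ => (if a i = b i then (0 : ℝ) else 1) / 2 ^ i := by
  refine Summable.of_nonneg_of_le (sdist_term_nonneg a b) (fun i => ?_)
    summable_geometric_two
  rw [one_div, inv_pow, ← one_div]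
  gcongr
  split <;> norm_num

noncomputable instance : MetricSpace Sig2 where
  dist := sdist
  dist_self a := by
    unfold sdist; simp
  dist_comm a b := by
    refine tsum_congr fun i => ?_
    by_cases h : a i = b i
    · rw [if_pos h, if_pos h.symm]
    · rw [if_neg h, if_neg fun h' => h h'.symm]
  dist_triangle a b c := by
    have key : ∀ i : ℕ, (if a i = c i then (0 : ℝ) else 1) / 2 ^ i ≤
        (if a i = b i then (0 : ℝ) else 1) / 2 ^ i
          + (if b i = c i then (0 : ℝ) else 1) / 2 ^ i := by
      intro i
      by_cases hac : a i = c i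
      · rw [if_pos hac, zero_div]
        exact add_nonneg (sdist_term_nonneg a b i) (sdist_term_nonneg b c i)
      · have h : ¬ a i = b i ∨ ¬ b i = c i := by
          by_contra hcon
          push_neg at hcon
          exact hac (hcon.1.trans hcon.2)
        rcases h with h | h
        · rw [if_neg hac, if_neg h]
          have := sdist_term_nonneg b c i
          linarith
        · rw [if_neg hac, if_neg h]
          have := sdist_term_nonneg a b i
          linarith
    calc sdist a c ≤ ∑' i : ℕ, ((if a i = b i then (0 : ℝ) else 1) / 2 ^ i
          + (if b i = c i then (0 : ℝ) else 1) / 2 ^ i) :=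
        Summable.tsum_le_tsum key (sdist_summable a c) ((sdist_summable a b).add (sdist_summable b c))
      _ = sdist a b + sdist b c := Summable.tsum_add (sdist_summable a b) (sdist_summable b c)
  eq_of_dist_eq_zero := by
    intro a b h
    funext i
    by_contra hne
    have hle := Summable.le_tsum (sdist_summable a b) i fun j _ => sdist_term_nonneg a b j
    rw [show (∑' i : ℕ, (if a i = b i then (0 : ℝ) else 1) / 2 ^ i) = 0 from h] at hle
    rw [if_neg hne] at hle
    have : (0 : ℝ) < 1 / 2 ^ i := by positivity
    exact absurd hle (not_le.mpr this)

/-- The shift map `σ` on `Σ₂`. -/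
def shiftS (x : Sig2) : Sig2 := fun n => x (n + 1)

/-- The ω-limit set of the point `u` under the shift `σ`. -/
def omegaLim (u : Sig2) : Set Sig2 :=
  ⋂ n : ℕ, closure {y : Sig2 | ∃ k : ℕ, n ≤ k ∧ y = shiftS^[k] u}

/-- The constant-`0` sequence `a = 000⋯`. -/
def aseq : Sig2 := fun _ => false

/-- The constant-`1` sequence `b = 111⋯`. -/
def bseq : Sig2 := fun _ => true

/-- The sequence `u` extending all the words `A_n`, viewed as a point of `Σ₂`. -/
def useqS : Sig2 := fun i => (Aword (i + 1)).getD i false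

/-- The multiple mapping `F = {σ, f₀}` where `f₀ ≡ a` is constant. -/
def Fsig : Fin 2 → Sig2 → Sig2 := ![shiftS, fun _ => aseq]

/-! The chaotic set consists of the points `E₁E₂E₃⋯` of `H`. The block `E_{k+1}` begins with a run
of `5^(2^(k+1))` equal symbols whose value is chosen freely, while `E₁⋯E_k` has length at most
`5 · 5^(2^k)`: seen from the end of that run, the earlier blocks occupy a vanishing fraction of the
orbit. Along an orbit `F^i(x) = {σⁱx, a}` for `i ≥ 1`, so `d_H(F^i x, F^i y) ≤ ρ(σⁱx, σⁱy)`, which is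
small when the runs of `x` and `y` carry the same symbol, while `d_H(F^i x, F^i y) ≥ 1` as soon as
`x_i ≠ y_i`. Coding `e : ℕ → Bool` into the choices so that any two codes agree at infinitely many
blocks, and distinct codes also disagree at infinitely many blocks, yields density `1` and
density `0` along suitable subsequences. Each prefix `E₁⋯E_k` is a suffix of `A_{2^k+1}`, which
occurs in `u` arbitrarily late, so the points lie in `ω(u, σ)`. -/

section Density

def HasLongRuns (p : ℕ → Prop) : Prop :=
  ∀ C N : ℕ, ∃ a n, N ≤ n ∧ C * a ≤ n ∧ ∀ i, a ≤ i → i < n → p i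

lemma HasLongRuns.mono {p q : ℕ → Prop} (hp : HasLongRuns p) (hpq : ∀ i, p i → q i) :
    HasLongRuns q := fun C N =>
  let ⟨a, n, hN, hC, hrun⟩ := hp C N
  ⟨a, n, hN, hC, fun i ha hn => hpq i (hrun i ha hn)⟩

lemma ncard_lt_and_le (n : ℕ) (p : ℕ → Prop) : {i | i < n ∧ p i}.ncard ≤ n := by
  calc {i | i < n ∧ p i}.ncard ≤ (Set.Iio n).ncard :=
        Set.ncard_le_ncard fun i hi => Set.mem_Iio.2 hi.1
    _ = n := Set.ncard_Iio_nat n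

lemma density_le_one (p : ℕ → Prop) (n : ℕ) : (({i | i < n ∧ p i}).ncard : ℝ) / n ≤ 1 :=
  div_le_one_of_le₀ (by exact_mod_cast ncard_lt_and_le n p) n.cast_nonneg

lemma cast_le_mul_of_succ_mul_le {ε : ℝ} {C a n : ℕ} (hε : 1 / ((C : ℝ) + 1) < ε)
    (h : (C + 1) * a ≤ n) : (a : ℝ) ≤ ε * n := by
  have h' : ((C : ℝ) + 1) * a ≤ n := by exact_mod_cast h
  rw [div_lt_iff₀ (by positivity)] at hε
  nlinarith [(a.cast_nonneg : (0 : ℝ) ≤ a)]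

lemma isBoundedUnder_le_density (p : ℕ → Prop) :
    IsBoundedUnder (· ≤ ·) atTop fun n : ℕ => (({i | i < n ∧ p i}).ncard : ℝ) / n :=
  isBoundedUnder_of ⟨1, density_le_one p⟩

lemma isBoundedUnder_ge_density (p : ℕ → Prop) :
    IsBoundedUnder (· ≥ ·) atTop fun n : ℕ => (({i | i < n ∧ p i}).ncard : ℝ) / n :=
  isBoundedUnder_of ⟨0, fun n => by positivity⟩

lemma limsup_density_eq_one {p : ℕ → Prop} (hp : HasLongRuns p) :
    limsup (fun n : ℕ => (({i | i < n ∧ p i}).ncard : ℝ) / n) atTop = 1 := by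
  refine le_antisymm (limsup_le_of_le (isBoundedUnder_ge_density p).isCoboundedUnder_le
    (.of_forall (density_le_one p))) (le_of_forall_sub_le fun ε hε => ?_)
  refine le_limsup_of_frequently_le (frequently_atTop.2 fun N => ?_)
    (isBoundedUnder_le_density p)
  obtain ⟨C, hC⟩ := exists_nat_one_div_lt hε
  obtain ⟨a, n, hN, hCa, hrun⟩ := hp (C + 1) (N + 1)
  have hcount : n - a ≤ {i | i < n ∧ p i}.ncard := by
    rw [← Set.ncard_Ico_nat]
    exact Set.ncard_le_ncard (fun i hi => ⟨hi.2, hrun i hi.1 hi.2⟩)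
      ((Set.finite_Iio n).subset fun i hi => hi.1)
  have hcount' : (n : ℝ) - a ≤ {i | i < n ∧ p i}.ncard := by
    rw [← Nat.cast_sub (by nlinarith)]
    exact_mod_cast hcount
  refine ⟨n, by omega, ?_⟩
  rw [le_div_iff₀ (by exact_mod_cast (show 0 < n by omega))]
  linarith [cast_le_mul_of_succ_mul_le hC hCa]

lemma liminf_density_eq_zero {p : ℕ → Prop} (hp : HasLongRuns fun i => ¬ p i) :
    liminf (fun n : ℕ => (({i | i < n ∧ p i}).ncard : ℝ) / n) atTop = 0 := by
  refine le_antisymm (le_of_forall_pos_le_add fun ε hε => ?_)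
    (le_liminf_of_le (isBoundedUnder_le_density p).isCoboundedUnder_ge
      (.of_forall fun n => by positivity))
  rw [zero_add]
  refine liminf_le_of_frequently_le (frequently_atTop.2 fun N => ?_)
    (isBoundedUnder_ge_density p)
  obtain ⟨C, hC⟩ := exists_nat_one_div_lt hε
  obtain ⟨a, n, hN, hCa, hrun⟩ := hp (C + 1) (N + 1)
  have hcount : {i | i < n ∧ p i}.ncard ≤ a := by
    rw [← Set.ncard_Iio_nat a]
    exact Set.ncard_le_ncard fun i hi => Set.mem_Iio.2 (by_contra fun hai =>
      hrun i (not_lt.1 hai) hi.1 hi.2)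
  refine ⟨n, by omega, ?_⟩
  rw [div_le_iff₀ (by exact_mod_cast (show 0 < n by omega))]
  exact (Nat.cast_le.2 hcount).trans (cast_le_mul_of_succ_mul_le hC hCa)

end Density

section HausdorffPair

variable {α : Type*} [PseudoMetricSpace α]

lemma hausdorffDist_pair_le_dist (p q z : α) :
    hausdorffDist ({p, z} : Set α) {q, z} ≤ dist p q := by
  apply hausdorffDist_le_of_mem_dist dist_nonneg
  · rintro x (rfl | rfl)
    · exact ⟨q, by simp, le_rfl⟩
    · exact ⟨x, by simp, by simp⟩
  · rintro x (rfl | rfl)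
    · exact ⟨p, by simp, (dist_comm x p).le⟩
    · exact ⟨x, by simp, by simp⟩

lemma le_hausdorffDist_pair {p q z : α} {r : ℝ} (hq : r ≤ dist p q) (hz : r ≤ dist p z) :
    r ≤ hausdorffDist ({p, z} : Set α) {q, z} := by
  have hne : hausdorffEDist ({p, z} : Set α) {q, z} ≠ ⊤ :=
    hausdorffEDist_ne_top_of_nonempty_of_bounded (by simp) (by simp)
      (Set.toFinite _).isBounded (Set.toFinite _).isBounded
  refine le_trans ?_ (infDist_le_hausdorffDist_of_mem (Set.mem_insert p _) hne)
  exact (le_infDist (by simp)).2 fun y hy => by rcases hy with rfl | rfl <;> assumption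

end HausdorffPair

section Shift

lemma dist_eq_tsum (a b : Sig2) :
    dist a b = ∑' i : ℕ, (if a i = b i then (0 : ℝ) else 1) / 2 ^ i := rfl

lemma sdist_term_le (a b : Sig2) (i : ℕ) :
    (if a i = b i then (0 : ℝ) else 1) / 2 ^ i ≤ (1 / 2) ^ i := by
  rw [one_div_pow]
  gcongr
  split <;> norm_num

lemma dist_le_of_forall_le_eq {a b : Sig2} {L : ℕ} (h : ∀ i ≤ L, a i = b i) :
    dist a b ≤ (1 / 2) ^ L := by
  have hhead : ∑ i ∈ Finset.range (L + 1), (if a i = b i then (0 : ℝ) else 1) / 2 ^ i = 0 :=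
    Finset.sum_eq_zero fun i hi => by
      rw [if_pos (h i (Nat.lt_succ_iff.1 (Finset.mem_range.1 hi))), zero_div]
  have htail : ∑' i, (if a (i + (L + 1)) = b (i + (L + 1)) then (0 : ℝ) else 1) / 2 ^ (i + (L + 1))
      ≤ ∑' i, (1 / 2 : ℝ) ^ (L + 1) * (1 / 2) ^ i :=
    Summable.tsum_le_tsum (fun i => by rw [← pow_add, add_comm]; exact sdist_term_le a b _)
      ((summable_nat_add_iff (f := fun i => (if a i = b i then (0 : ℝ) else 1) / 2 ^ i)
        (L + 1)).2 (sdist_summable a b)) (summable_geometric_two.mul_left _)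
  calc dist a b
      = ∑' i, (if a (i + (L + 1)) = b (i + (L + 1)) then (0 : ℝ) else 1) / 2 ^ (i + (L + 1)) := by
        rw [dist_eq_tsum, ← (sdist_summable a b).sum_add_tsum_nat_add (L + 1), hhead, zero_add]
    _ ≤ (1 / 2) ^ (L + 1) * ∑' i, (1 / 2 : ℝ) ^ i := htail.trans_eq tsum_mul_left
    _ = (1 / 2) ^ L := by rw [tsum_geometric_two, pow_succ]; ring

lemma one_le_dist_of_apply_zero_ne {a b : Sig2} (h : a 0 ≠ b 0) : 1 ≤ dist a b := by
  rw [dist_eq_tsum]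
  simpa [if_neg h] using (sdist_summable a b).le_tsum 0 fun j _ => sdist_term_nonneg a b j

lemma shiftS_iterate_apply (k : ℕ) (x : Sig2) (n : ℕ) : shiftS^[k] x n = x (n + k) := by
  induction k generalizing x with
  | zero => rfl
  | succ k ih => rw [Function.iterate_succ_apply, ih]; rfl

lemma iterSet_Fsig_succ (n : ℕ) (x : Sig2) :
    iterSet Fsig (n + 1) x = {shiftS^[n + 1] x, aseq} := by
  have hunion : ∀ m y, iterSet Fsig (m + 1) y = iterSet Fsig m (shiftS y) ∪ iterSet Fsig m aseq :=
    fun m y => by ext; simp [iterSet, Fin.exists_fin_two, Fsig]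
  induction n generalizing x with
  | zero => exact (hunion 0 x).trans Set.singleton_union
  | succ n ih =>
    rw [hunion, ih, ih, Function.iterate_fixed (rfl : shiftS aseq = aseq),
      ← Function.iterate_succ_apply, Set.pair_eq_singleton, Set.union_singleton]
    exact Set.insert_eq_of_mem (by simp)

lemma hausdorffDist_iterSet_le {x y : Sig2} {i L : ℕ} (hi : 1 ≤ i)
    (h : ∀ l ≤ L, x (l + i) = y (l + i)) :
    hausdorffDist (iterSet Fsig i x) (iterSet Fsig i y) ≤ (1 / 2) ^ L := by
  obtain ⟨n, rfl⟩ : ∃ n, i = n + 1 := ⟨i - 1, by omega⟩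
  rw [iterSet_Fsig_succ, iterSet_Fsig_succ]
  refine (hausdorffDist_pair_le_dist _ _ _).trans (dist_le_of_forall_le_eq fun l hl => ?_)
  rw [shiftS_iterate_apply, shiftS_iterate_apply]
  exact h l hl

lemma one_le_hausdorffDist_pair_aseq {p q : Sig2} (h : p 0 ≠ q 0) :
    1 ≤ hausdorffDist ({p, aseq} : Set Sig2) {q, aseq} := by
  wlog hp : p 0 = true generalizing p q
  · rw [hausdorffDist_comm]
    exact this (Ne.symm h) (by cases hq : q 0 <;> simp_all)
  exact le_hausdorffDist_pair (one_le_dist_of_apply_zero_ne h)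
    (one_le_dist_of_apply_zero_ne (by simp [hp, aseq]))

lemma one_le_hausdorffDist_iterSet {x y : Sig2} {i : ℕ} (hi : 1 ≤ i) (h : x i ≠ y i) :
    1 ≤ hausdorffDist (iterSet Fsig i x) (iterSet Fsig i y) := by
  obtain ⟨n, rfl⟩ : ∃ n, i = n + 1 := ⟨i - 1, by omega⟩
  rw [iterSet_Fsig_succ, iterSet_Fsig_succ]
  refine one_le_hausdorffDist_pair_aseq ?_
  rwa [shiftS_iterate_apply, shiftS_iterate_apply, zero_add]

lemma mem_omegaLim_of_forall_exists {u y : Sig2}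
    (h : ∀ L n : ℕ, ∃ p ≥ n, ∀ j ≤ L, y j = u (j + p)) : y ∈ omegaLim u := by
  refine Set.mem_iInter.2 fun n => Metric.mem_closure_iff.2 fun ε hε => ?_
  obtain ⟨L, hL⟩ := exists_pow_lt_of_lt_one hε one_half_lt_one
  obtain ⟨p, hpn, hp⟩ := h L n
  refine ⟨shiftS^[p] u, ⟨p, hpn, rfl⟩, (dist_le_of_forall_le_eq fun j hj => ?_).trans_lt hL⟩
  rw [shiftS_iterate_apply]
  exact hp j hj

end Shift

section Words

lemma List.IsPrefix.getD_eq {α : Type*} {l₁ l₂ : List α} (h : l₁ <+: l₂) {i : ℕ}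
    (hi : i < l₁.length) (d : α) : l₂.getD i d = l₁.getD i d := by
  obtain ⟨t, rfl⟩ := h
  exact List.getD_append _ _ _ _ hi

lemma getD_succ_eq_of_isPrefix_chain {α : Type*} {w : ℕ → List α} (hw : ∀ k, w k <+: w (k + 1))
    (hlen : ∀ k, k ≤ (w k).length) (d : α) {i k : ℕ} (hi : i < (w k).length) :
    (w (i + 1)).getD i d = (w k).getD i d := by
  rcases le_total (i + 1) k with h | h
  · exact ((Nat.rel_of_forall_rel_succ_of_le (· <+: ·) hw h).getD_eq (hlen (i + 1)) d).symm
  · exact (Nat.rel_of_forall_rel_succ_of_le (· <+: ·) hw h).getD_eq hi d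

lemma length_Aword {n : ℕ} (hn : 1 ≤ n) : (Aword n).length = 5 ^ n := by
  induction n, hn using Nat.le_induction with
  | base => rfl
  | succ n hn ih =>
    obtain ⟨m, rfl⟩ : ∃ m, n = m + 1 := ⟨n - 1, by omega⟩
    simp only [Aword, List.length_append, List.length_replicate, ih]
    ring

lemma le_length_Aword (n : ℕ) : n ≤ (Aword n).length := by
  rcases Nat.eq_zero_or_pos n with rfl | hn
  · exact le_rfl
  · exact (length_Aword hn).symm ▸ (Nat.lt_pow_self (by norm_num)).le

lemma Aword_succ {n : ℕ} (hn : 1 ≤ n) :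
    Aword (n + 1) = Aword n ++ List.replicate (5 ^ n) false ++ Aword n
      ++ List.replicate (5 ^ n) true ++ Aword n := by
  obtain ⟨m, rfl⟩ : ∃ m, n = m + 1 := ⟨n - 1, by omega⟩
  rw [← length_Aword hn]
  rfl

lemma Aword_isPrefix_succ (n : ℕ) : Aword n <+: Aword (n + 1) := by
  rcases Nat.eq_zero_or_pos n with rfl | hn
  · exact List.nil_prefix
  · rw [Aword_succ hn, List.append_assoc, List.append_assoc, List.append_assoc]
    exact List.prefix_append _ _

lemma Aword_isSuffix_succ (n : ℕ) : Aword n <:+ Aword (n + 1) := by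
  rcases Nat.eq_zero_or_pos n with rfl | hn
  · exact List.nil_suffix
  · rw [Aword_succ hn]
    exact List.suffix_append _ _

lemma useqS_eq_getD {M i : ℕ} (hi : i < (Aword M).length) : useqS i = (Aword M).getD i false :=
  getD_succ_eq_of_isPrefix_chain Aword_isPrefix_succ le_length_Aword false hi

end Words

section Construction

/-- The block `E_k` of `H` whose leading run of `5^(2^k)` symbols is `b`: `I A` if `b` is `1`,
`O A I A` if `b` is `0` (with `A = A_{2^k}`). -/
def block (b : Bool) (k : ℕ) : List Bool :=
  if b then List.replicate (5 ^ 2 ^ k) true ++ Aword (2 ^ k)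
  else List.replicate (5 ^ 2 ^ k) false ++ Aword (2 ^ k) ++ List.replicate (5 ^ 2 ^ k) true
    ++ Aword (2 ^ k)

/-- `E₁ ⋯ E_k`, where the leading symbol of `E_{j+1}` is `c j`. -/
def blocks (c : ℕ → Bool) : ℕ → List Bool
  | 0 => []
  | k + 1 => blocks c k ++ block (c k) (k + 1)

def chaoticPoint (c : ℕ → Bool) : Sig2 := fun i => (blocks c (i + 1)).getD i false

lemma five_pow_two_pow_succ (k : ℕ) : 5 ^ 2 ^ (k + 1) = 5 ^ 2 ^ k * 5 ^ 2 ^ k := by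
  rw [pow_succ, pow_mul, sq]

lemma length_block (b : Bool) (k : ℕ) :
    5 ^ 2 ^ k ≤ (block b k).length ∧ (block b k).length ≤ 4 * 5 ^ 2 ^ k := by
  have hA := length_Aword (Nat.one_le_two_pow (n := k))
  cases b <;> simp only [block, Bool.false_eq_true, if_false, if_true, List.length_append,
    List.length_replicate, hA] <;> omega

lemma getD_block {b : Bool} {k i : ℕ} (hi : i < 5 ^ 2 ^ k) : (block b k).getD i false = b := by
  cases b <;> simp [block, List.getD_eq_getElem?_getD, List.getElem?_append, hi]

lemma le_length_blocks (c : ℕ → Bool) (k : ℕ) : k ≤ (blocks c k).length := by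
  induction k with
  | zero => exact le_rfl
  | succ k ih =>
    have := (length_block (c k) (k + 1)).1
    have := Nat.one_le_pow (2 ^ (k + 1)) 5 (by norm_num)
    rw [blocks, List.length_append]
    omega

lemma length_blocks_le (c : ℕ → Bool) (k : ℕ) : (blocks c k).length ≤ 5 * 5 ^ 2 ^ k := by
  induction k with
  | zero => simp [blocks]
  | succ k ih =>
    have hblock := (length_block (c k) (k + 1)).2
    have h5 : 5 ≤ 5 ^ 2 ^ k := Nat.le_self_pow (Nat.two_pow_pos k).ne' 5
    rw [blocks, List.length_append, five_pow_two_pow_succ] at *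
    nlinarith

lemma blocks_isSuffix_Aword (c : ℕ → Bool) (k : ℕ) : blocks c k <:+ Aword (2 ^ k + 1) := by
  induction k with
  | zero => exact List.nil_suffix
  | succ k ih =>
    obtain ⟨pre, hpre⟩ : blocks c k <:+ Aword (2 ^ (k + 1)) :=
      ih.trans (Nat.rel_of_forall_rel_succ_of_le (· <:+ ·) Aword_isSuffix_succ
        (by rw [pow_succ]; have := Nat.one_le_two_pow (n := k); omega))
    rw [Aword_succ Nat.one_le_two_pow, blocks, block]
    cases c k
    · exact ⟨pre, by simp [← hpre]⟩
    · exact ⟨Aword (2 ^ (k + 1)) ++ List.replicate (5 ^ 2 ^ (k + 1)) false ++ pre,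
        by simp [← hpre]⟩

lemma chaoticPoint_eq_getD (c : ℕ → Bool) {k i : ℕ} (hi : i < (blocks c k).length) :
    chaoticPoint c i = (blocks c k).getD i false :=
  getD_succ_eq_of_isPrefix_chain (fun _ => List.prefix_append _ _) (le_length_blocks c) false hi

lemma chaoticPoint_eq_of_mem_run (c : ℕ → Bool) {k i : ℕ} (h₁ : (blocks c k).length ≤ i)
    (h₂ : i < (blocks c k).length + 5 ^ 2 ^ (k + 1)) : chaoticPoint c i = c k := by
  have hlen : i < (blocks c (k + 1)).length := by
    rw [blocks, List.length_append]
    have := (length_block (c k) (k + 1)).1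
    omega
  rw [chaoticPoint_eq_getD c hlen, blocks, List.getD_append_right _ _ _ _ h₁]
  exact getD_block (by omega)

lemma chaoticPoint_mem_omegaLim (c : ℕ → Bool) : chaoticPoint c ∈ omegaLim useqS := by
  refine mem_omegaLim_of_forall_exists fun L n => ?_
  set W := blocks c (L + 1)
  set M := 2 ^ (L + 1) + 1 + n + W.length
  obtain ⟨pre, hpre⟩ : W <:+ Aword M := (blocks_isSuffix_Aword c (L + 1)).trans
    (Nat.rel_of_forall_rel_succ_of_le (· <:+ ·) Aword_isSuffix_succ (by omega))
  have hlen : pre.length + W.length = (Aword M).length := by rw [← hpre, List.length_append]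
  have hM : M ≤ (Aword M).length := le_length_Aword M
  have hLW : L + 1 ≤ W.length := le_length_blocks c (L + 1)
  refine ⟨pre.length, by have := Nat.two_pow_pos L; omega, fun j hj => ?_⟩
  rw [useqS_eq_getD (M := M) (by omega), ← hpre, List.getD_append_right _ _ _ _ (by omega),
    Nat.add_sub_cancel, chaoticPoint_eq_getD c (show j < W.length by omega)]

lemma exists_run (c c' : ℕ → Bool) (C N L : ℕ) {k : ℕ} (hk : 5 * C + N + L < k) :
    ∃ a n, N ≤ n ∧ C * a ≤ n ∧ 1 ≤ a ∧
      ∀ i, a ≤ i → i < n + L → chaoticPoint c i = c k ∧ chaoticPoint c' i = c' k := by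
  set q := 5 ^ 2 ^ k
  have hkq : k < q := Nat.lt_two_pow_self.trans (Nat.lt_pow_self (by norm_num))
  have hP : (blocks c k).length ≤ 5 * q := length_blocks_le c k
  have hQ : (blocks c' k).length ≤ 5 * q := length_blocks_le c' k
  have hP1 := le_length_blocks c k
  have hqq : 5 ^ 2 ^ (k + 1) = q * q := five_pow_two_pow_succ k
  have hCa := Nat.mul_le_mul_left C (max_le hP hQ)
  have hCq : C * (5 * q) + N + L ≤ q * q := by nlinarith
  refine ⟨max (blocks c k).length (blocks c' k).length, q * q - L, by omega, by omega, by omega,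
    fun i hai hin => ⟨chaoticPoint_eq_of_mem_run c (by omega) (by omega),
      chaoticPoint_eq_of_mem_run c' (by omega) (by omega)⟩⟩

end Construction

section Coding

/-- Even blocks are fixed; block `2 ⟨i, l⟩ + 1` carries `e i`, so each `e i` recurs infinitely
often. -/
def blockChoice (e : ℕ → Bool) (k : ℕ) : Bool :=
  if k % 2 = 0 then true else e (k / 2).unpair.1

lemma frequently_blockChoice_eq (e e' : ℕ → Bool) :
    ∃ᶠ k in atTop, blockChoice e k = blockChoice e' k :=
  frequently_atTop.2 fun K => ⟨2 * K, by omega, by simp [blockChoice]⟩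

lemma frequently_blockChoice_ne {e e' : ℕ → Bool} (h : e ≠ e') :
    ∃ᶠ k in atTop, blockChoice e k ≠ blockChoice e' k := by
  obtain ⟨i, hi⟩ := Function.ne_iff.1 h
  refine frequently_atTop.2 fun K => ⟨2 * Nat.pair i K + 1,
    by have := Nat.right_le_pair i K; omega, ?_⟩
  have hodd : (2 * Nat.pair i K + 1) % 2 ≠ 0 := by omega
  have hhalf : (2 * Nat.pair i K + 1) / 2 = Nat.pair i K := by omega
  simpa [blockChoice, hodd, hhalf] using hi

lemma hasLongRuns_agree {c c' : ℕ → Bool} (h : ∃ᶠ k in atTop, c k = c' k) (L : ℕ) :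
    HasLongRuns fun i => 1 ≤ i ∧ ∀ l ≤ L, chaoticPoint c (l + i) = chaoticPoint c' (l + i) := by
  intro C N
  obtain ⟨k, hk, hck⟩ := frequently_atTop.1 h (5 * C + N + (L + 1) + 1)
  obtain ⟨a, n, hN, hC, ha, hrun⟩ := exists_run c c' C N (L + 1) hk
  refine ⟨a, n, hN, hC, fun i hai hin => ⟨by omega, fun l hl => ?_⟩⟩
  obtain ⟨hx, hy⟩ := hrun (l + i) (by omega) (by omega)
  rw [hx, hy, hck]

lemma hasLongRuns_disagree {c c' : ℕ → Bool} (h : ∃ᶠ k in atTop, c k ≠ c' k) :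
    HasLongRuns fun i => 1 ≤ i ∧ chaoticPoint c i ≠ chaoticPoint c' i := by
  intro C N
  obtain ⟨k, hk, hck⟩ := frequently_atTop.1 h (5 * C + N + 1)
  obtain ⟨a, n, hN, hC, ha, hrun⟩ := exists_run c c' C N 0 hk
  refine ⟨a, n, hN, hC, fun i hai hin => ⟨by omega, ?_⟩⟩
  obtain ⟨hx, hy⟩ := hrun i hai (by omega)
  rwa [hx, hy]

lemma chaoticPoint_blockChoice_injective : Function.Injective (chaoticPoint ∘ blockChoice) := by
  intro e e' heq
  by_contra hne
  obtain ⟨a, n, hN, hC, hrun⟩ := hasLongRuns_disagree (frequently_blockChoice_ne hne) 2 1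
  exact (hrun a le_rfl (by omega)).2 (congrFun heq a)

end Coding

lemma not_countable_range_of_injective {α β : Type*} (hα : ¬ Countable α) {f : α → β}
    (hf : Function.Injective f) : ¬ (Set.range f).Countable := fun h =>
  have := h.to_subtype
  hα (Equiv.ofInjective f hf).injective.countable

/-- Let `X = ω(u, σ)` and `F = {σ, f₀}` with `f₀ ≡ a = 000⋯`. The system `(X, F)` is
Hausdorff metric distributionally chaotic: there is an uncountable `S ⊆ X` such that for any
distinct `x, y ∈ S`, `limsup_n (1/n)·#{0 ≤ i ≤ n-1 : d_H(F^i(x), F^i(y)) < t} = 1` for all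
`t > 0`, and `liminf_n (1/n)·#{0 ≤ i ≤ n-1 : d_H(F^i(x), F^i(y)) < 1} = 0`. -/
theorem shift_system_distributionally_chaotic :
    ∃ S : Set Sig2, S ⊆ omegaLim useqS ∧ ¬ S.Countable ∧
      ∀ x ∈ S, ∀ y ∈ S, x ≠ y →
        (∀ t > (0 : ℝ),
          Filter.limsup (fun n : ℕ =>
            (({i : ℕ | i < n ∧
              Metric.hausdorffDist (iterSet Fsig i x) (iterSet Fsig i y) < t}).ncard : ℝ) / n)
            Filter.atTop = 1) ∧
        Filter.liminf (fun n : ℕ =>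
          (({i : ℕ | i < n ∧
            Metric.hausdorffDist (iterSet Fsig i x) (iterSet Fsig i y) < 1}).ncard : ℝ) / n)
          Filter.atTop = 0 := by
  have hcantor : ¬ Countable (ℕ → Bool) := by
    simp [← Cardinal.mk_le_aleph0_iff, Cardinal.aleph0_lt_continuum]
  refine ⟨Set.range (chaoticPoint ∘ blockChoice),
    Set.range_subset_iff.2 fun e => chaoticPoint_mem_omegaLim _,
    not_countable_range_of_injective hcantor chaoticPoint_blockChoice_injective, ?_⟩
  rintro _ ⟨e, rfl⟩ _ ⟨e', rfl⟩ hne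
  refine ⟨fun t ht => ?_, ?_⟩
  · obtain ⟨L, hL⟩ := exists_pow_lt_of_lt_one ht one_half_lt_one
    exact limsup_density_eq_one ((hasLongRuns_agree (frequently_blockChoice_eq e e') L).mono
      fun i ⟨hi, h⟩ => (hausdorffDist_iterSet_le hi h).trans_lt hL)
  · have hee' : e ≠ e' := fun h => hne (h ▸ rfl)
    exact liminf_density_eq_zero ((hasLongRuns_disagree (frequently_blockChoice_ne hee')).mono
      fun i ⟨hi, h⟩ => (one_le_hausdorffDist_iterSet hi h).not_gt)
end
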